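/- arXiv:0910.4048 — 3 statements merged into one kernel-verified Lean document; each statement's English description precedes it below -/
import Mathlib

section
/- For each real u > 0, u equals the sum over m from 1 to infinity of (1/m) times the sum over k from 1 to m of binom(m,k) * (-1)^(k+1) * ln(k*u + 1). -/
/-!
Write `log (k u + 1) = ∫₀ᵘ k / (k t + 1) dt` and put `q n t = ∏_{j=1}^n j t / (j t + 1)`.
By partial fractions, `∑_{k=0}^n (n choose k) (-1)^k / (k t + 1) = q n t`, and this turns the
`m`-th term of the series into `∫₀ᵘ (q m - q (m + 1))`. The partial sums thus telescope to
`u - ∫₀ᵘ q n`, and `q n t → 0` because `(q n t)⁻¹ = ∏_{j=1}^n (1 + 1 / (j t))` dominates the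
divergent harmonic sum `t⁻¹ ∑_{j=1}^n 1 / j`.
-/

open Finset Real Filter Topology

theorem sum_range_choose_mul_neg_one_pow_div {K : Type*} [Field K] (n : ℕ) {x t : K}
    (h : ∀ j ≤ n, j * t + x ≠ 0) :
    ∑ k ∈ range (n + 1), (n.choose k : K) * (-1) ^ k / (k * t + x) =
      n.factorial * t ^ n / ∏ j ∈ range (n + 1), (j * t + x) := by
  induction n generalizing x with
  | zero => simp
  | succ n ih =>
    have h₀ : ∀ j ≤ n, j * t + x ≠ 0 := fun j hj => h j (by omega)
    have h₁ : ∀ j ≤ n, j * t + (x + t) ≠ 0 := fun j hj => by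
      convert h (j + 1) (by omega) using 1; push_cast; ring
    have hA : ∏ j ∈ range n, ((j + 1 : ℕ) * t + x) ≠ 0 :=
      prod_ne_zero_iff.2 fun j hj => h (j + 1) (by rw [mem_range] at hj; omega)
    have hx : x ≠ 0 := by simpa using h 0 (by omega)
    have hlast : (n + 1 : ℕ) * t + x ≠ 0 := h (n + 1) le_rfl
    calc ∑ k ∈ range (n + 2), ((n + 1).choose k : K) * (-1) ^ k / (k * t + x)
        = ∑ k ∈ range (n + 1), (n.choose k : K) * (-1) ^ k / (k * t + x)
          - ∑ k ∈ range (n + 1), (n.choose k : K) * (-1) ^ k / (k * t + (x + t)) := by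
          simp only [mul_div_assoc]
          rw [sum_choose_succ_mul (fun k _ => (-1) ^ k / (k * t + x)), sub_eq_add_neg,
            ← sum_neg_distrib]
          congr! 2 with k
          push_cast
          ring
      _ = n.factorial * t ^ n / ∏ j ∈ range (n + 1), (j * t + x)
          - n.factorial * t ^ n / ∏ j ∈ range (n + 1), (j * t + (x + t)) := by rw [ih h₀, ih h₁]
      _ = _ := by
          have e : ∀ j : ℕ, j * t + (x + t) = (j + 1 : ℕ) * t + x := fun j => by push_cast; ring
          simp only [e]
          rw [prod_range_succ' (fun j : ℕ => j * t + x) (n + 1),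
            prod_range_succ' (fun j : ℕ => j * t + x) n,
            prod_range_succ (fun j : ℕ => (j + 1 : ℕ) * t + x) n]
          simp only [Nat.cast_zero, zero_mul, zero_add, Nat.factorial_succ]
          generalize ∏ j ∈ range n, ((j + 1 : ℕ) * t + x) = A at hA ⊢
          push_cast at hlast ⊢
          field_simp
          ring

theorem integral_div_mul_add_one {c u : ℝ} (h : 0 < c * u + 1) :
    ∫ t in (0 : ℝ)..u, c / (c * t + 1) = log (c * u + 1) := by
  have := intervalIntegral.mul_integral_comp_mul_left (a := 0) (b := u)
    (f := fun x : ℝ => 1 / (x + 1)) (c := c)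
  rw [intervalIntegral.integral_comp_add_right (fun x => 1 / x), mul_zero, zero_add,
    integral_one_div_of_pos one_pos h, div_one, ← intervalIntegral.integral_const_mul] at this
  simpa only [mul_one_div] using this

theorem one_add_sum_le_prod_one_add {ι R : Type*} [CommSemiring R] [PartialOrder R]
    [IsOrderedRing R] (s : Finset ι) {f : ι → R} (hf : ∀ i ∈ s, 0 ≤ f i) :
    1 + ∑ i ∈ s, f i ≤ ∏ i ∈ s, (1 + f i) := by
  classical
  induction s using Finset.induction_on with
  | empty => simp
  | insert i s hi ih =>
    have hfi : 0 ≤ f i := hf i (mem_insert_self i s)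
    have hS : 0 ≤ ∑ j ∈ s, f j := sum_nonneg fun j hj => hf j (mem_insert_of_mem hj)
    rw [sum_insert hi, prod_insert hi]
    calc 1 + (f i + ∑ j ∈ s, f j)
        ≤ 1 + (f i + ∑ j ∈ s, f j) + f i * ∑ j ∈ s, f j :=
          le_add_of_nonneg_right (mul_nonneg hfi hS)
      _ = (1 + f i) * (1 + ∑ j ∈ s, f j) := by ring
      _ ≤ (1 + f i) * ∏ j ∈ s, (1 + f j) :=
          mul_le_mul_of_nonneg_left (ih fun j hj => hf j (mem_insert_of_mem hj))
            (add_nonneg zero_le_one hfi)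

namespace LogBinomialSeries

noncomputable def q (n : ℕ) (t : ℝ) : ℝ :=
  ∏ j ∈ range n, ((j + 1 : ℕ) * t / ((j + 1 : ℕ) * t + 1))

variable {n : ℕ} {t : ℝ}

theorem q_succ :
    q (n + 1) t = q n t * ((n + 1 : ℕ) * t / ((n + 1 : ℕ) * t + 1)) :=
  prod_range_succ _ _

theorem q_nonneg (ht : 0 ≤ t) : 0 ≤ q n t :=
  prod_nonneg fun _ _ => by positivity

theorem q_succ_le (ht : 0 ≤ t) : q (n + 1) t ≤ q n t := by
  rw [q_succ]
  refine mul_le_of_le_one_right (q_nonneg ht) ((div_le_one (by positivity)).2 ?_)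
  linarith

theorem q_le_q_of_le {s : ℝ} (ht : 0 ≤ t) (hts : t ≤ s) : q n t ≤ q n s := by
  refine prod_le_prod (fun _ _ => by positivity) fun j _ => ?_
  have hs : 0 ≤ s := ht.trans hts
  rw [div_le_div_iff₀ (by positivity) (by positivity)]
  nlinarith [(Nat.cast_nonneg (j + 1) : (0 : ℝ) ≤ (j + 1 : ℕ))]

theorem q_eq_sum_choose (ht : 0 ≤ t) :
    q n t = ∑ k ∈ range (n + 1), (n.choose k : ℝ) * (-1) ^ k / (k * t + 1) := by
  rw [sum_range_choose_mul_neg_one_pow_div n fun j _ => by positivity,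
    prod_range_succ', q, prod_div_distrib, prod_mul_distrib, prod_const, card_range,
    ← prod_range_add_one_eq_factorial]
  push_cast
  simp

theorem continuousOn_q (n : ℕ) : ContinuousOn (q n) (Set.Ici 0) :=
  continuousOn_finsetProd _ fun j _ =>
    (by fun_prop : Continuous _).continuousOn.div (by fun_prop) fun t (ht : 0 ≤ t) => by positivity

theorem intervalIntegrable_q (n : ℕ) {u : ℝ} (hu : 0 ≤ u) :
    IntervalIntegrable (q n) MeasureTheory.volume 0 u :=
  ((continuousOn_q n).mono Set.Icc_subset_Ici_self).intervalIntegrable_of_Icc hu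

theorem sum_Icc_choose_mul_div_eq_mul_sub (ht : 0 < t) :
    ∑ k ∈ Icc 1 (n + 1), ((n + 1).choose k : ℝ) * (-1) ^ (k + 1) * (k / (k * t + 1)) =
      (n + 1) * (q n t - q (n + 1) t) := by
  -- `k / (k t + 1) = (1 - 1 / (k t + 1)) / t`, and the alternating binomial sum kills the `1`.
  have alternating : ∑ k ∈ range (n + 2), ((n + 1).choose k : ℝ) * (-1) ^ k = 0 := by
    have := Int.alternating_sum_range_choose_of_ne n.succ_ne_zero
    exact_mod_cast (sum_congr rfl fun k _ => mul_comm _ _).trans this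
  calc ∑ k ∈ Icc 1 (n + 1), ((n + 1).choose k : ℝ) * (-1) ^ (k + 1) * (k / (k * t + 1))
      = ∑ k ∈ range (n + 2), ((n + 1).choose k : ℝ) * (-1) ^ (k + 1) * (k / (k * t + 1)) := by
        refine sum_subset (fun k hk => by simp only [mem_Icc, mem_range] at hk ⊢; omega)
          fun k hk hk' => ?_
        obtain rfl : k = 0 := by simp only [mem_Icc, mem_range, not_and, not_le] at hk hk'; omega
        simp
    _ = (∑ k ∈ range (n + 2), ((n + 1).choose k : ℝ) * (-1) ^ k / (k * t + 1)
          - ∑ k ∈ range (n + 2), ((n + 1).choose k : ℝ) * (-1) ^ k) / t := by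
        rw [← sum_sub_distrib, sum_div]
        refine sum_congr rfl fun k _ => ?_
        field_simp
        ring
    _ = q (n + 1) t / t := by rw [alternating, sub_zero, q_eq_sum_choose ht.le]
    _ = (n + 1) * (q n t - q (n + 1) t) := by
        rw [q_succ]
        push_cast
        field_simp
        ring

theorem q_tendsto_zero (ht : 0 < t) : Tendsto (fun n => q n t) atTop (𝓝 0) := by
  have inv_q : ∀ n, (q n t)⁻¹ = ∏ j ∈ range n, (1 + t⁻¹ * (1 / ((j : ℝ) + 1))) := fun n => by
    rw [q, ← prod_inv_distrib]
    refine prod_congr rfl fun j _ => ?_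
    push_cast
    field_simp
  have harmonic := tendsto_sum_range_one_div_nat_succ_atTop.const_mul_atTop (inv_pos.2 ht)
  have : Tendsto (fun n => (q n t)⁻¹) atTop atTop := by
    refine tendsto_atTop_mono (fun n => ?_) harmonic
    rw [inv_q, mul_sum]
    exact (le_add_of_nonneg_left zero_le_one).trans
      (one_add_sum_le_prod_one_add _ fun j _ => by positivity)
  exact this.inv_tendsto_atTop.congr fun n => inv_inv _

theorem integral_q_tendsto_zero {u : ℝ} (hu : 0 < u) :
    Tendsto (fun n => ∫ t in (0 : ℝ)..u, q n t) atTop (𝓝 0) := by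
  refine squeeze_zero (fun n => intervalIntegral.integral_nonneg hu.le fun t ht => q_nonneg ht.1)
    (fun n => ?_) (by simpa using (q_tendsto_zero hu).const_mul u)
  simpa using intervalIntegral.integral_mono_on hu.le (intervalIntegrable_q n hu.le)
    intervalIntegrable_const fun t ht => q_le_q_of_le ht.1 ht.2

noncomputable def term (u : ℝ) (m : ℕ) : ℝ :=
  (1 / (m + 1 : ℝ)) *
    ∑ k ∈ Icc 1 (m + 1), (Nat.choose (m + 1) k : ℝ) * (-1) ^ (k + 1) * Real.log (k * u + 1)

theorem term_eq_integral {u : ℝ} (hu : 0 < u) (m : ℕ) :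
    term u m = ∫ t in (0 : ℝ)..u, (q m t - q (m + 1) t) := by
  have log_eq (k : ℕ) : Real.log (k * u + 1) = ∫ t in (0 : ℝ)..u, (k / (k * t + 1)) :=
    (integral_div_mul_add_one (by positivity)).symm
  have integrable (k : ℕ) :
      IntervalIntegrable (fun t : ℝ => k / (k * t + 1)) MeasureTheory.volume 0 u :=
    ContinuousOn.intervalIntegrable_of_Icc hu.le <| (by fun_prop : Continuous _).continuousOn.div
      (by fun_prop) fun t ht => by have := ht.1; positivity
  simp_rw [term, log_eq, ← intervalIntegral.integral_const_mul]
  rw [← intervalIntegral.integral_finsetSum fun k _ => (integrable k).const_mul _,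
    ← intervalIntegral.integral_const_mul]
  refine intervalIntegral.integral_congr_ae (MeasureTheory.ae_of_all _ fun t ht => ?_)
  rw [Set.uIoc_of_le hu.le] at ht
  rw [sum_Icc_choose_mul_div_eq_mul_sub ht.1]
  field_simp

theorem term_nonneg {u : ℝ} (hu : 0 < u) (m : ℕ) : 0 ≤ term u m := by
  rw [term_eq_integral hu]
  exact intervalIntegral.integral_nonneg hu.le fun t ht => sub_nonneg.2 (q_succ_le ht.1)

theorem sum_range_term {u : ℝ} (hu : 0 < u) (n : ℕ) :
    ∑ m ∈ range n, term u m = u - ∫ t in (0 : ℝ)..u, q n t := by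
  have hq (m : ℕ) := intervalIntegrable_q m hu.le
  simp_rw [term_eq_integral hu]
  rw [← intervalIntegral.integral_finsetSum fun m _ => (hq m).sub (hq (m + 1))]
  have q_zero : q 0 = fun _ => 1 := funext fun _ => prod_range_zero _
  simp_rw [sum_range_sub' (fun m => q m _), q_zero]
  rw [intervalIntegral.integral_sub intervalIntegrable_const (hq n)]
  simp

end LogBinomialSeries

theorem stmt4 (u : ℝ) (hu : 0 < u) :
    HasSum (fun m : ℕ =>
        (1 / (m + 1 : ℝ)) *
          ∑ k ∈ Icc 1 (m + 1), (Nat.choose (m + 1) k : ℝ) * (-1) ^ (k + 1) * Real.log (k * u + 1))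
      u := by
  show HasSum (LogBinomialSeries.term u) u
  rw [hasSum_iff_tendsto_nat_of_nonneg (LogBinomialSeries.term_nonneg hu),
    funext (LogBinomialSeries.sum_range_term hu)]
  simpa using (LogBinomialSeries.integral_q_tendsto_zero hu).const_sub u
end

section
/- For each real u > 0, ln u equals the sum over m from 0 to infinity of the inner sum over k from 0 to m of binom(m,k) * (-1)^k * ln(k + u + 1). -/
open Finset Real

/-!
The `m`-th term of the series is `(-1)^m Δ^m log (u + 1)`, where `Δ` is the forward difference
with step `1`, and since `Δ^m log (u + 1) = Δ^m log u + Δ^(m+1) log u` the series telescopes: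
its partial sums are `log u - (-1)^N Δ^N log u`. Differentiation commutes with `Δ`, so by the mean
value theorem `Δ^(n+1) log x = Δ^n (·⁻¹) ξ = (-1)^n n! / (ξ (ξ + 1) ⋯ (ξ + n))` for some
`ξ ∈ (x, x + 1)`. This pins the sign of every term past the first, and bounds `|Δ^(n+1) log x|`
by `n! / (x (x + 1) ⋯ (x + n)) = GammaSeq x n / n^x`, which tends to `Γ(x) · 0 = 0`.
-/

open Filter Topology fwdDiff
open scoped Nat

lemma sum_range_choose_mul_neg_one_pow_eq_fwdDiff_iter (f : ℝ → ℝ) (x : ℝ) (n : ℕ) :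
    ∑ k ∈ range (n + 1), (n.choose k : ℝ) * (-1) ^ k * f (k + x) =
      (-1) ^ n * (Δ_[1])^[n] f x := by
  rw [fwdDiff_iter_eq_sum_shift, mul_sum]
  refine sum_congr rfl fun k hk => ?_
  have hsign : (-1 : ℝ) ^ n * (-1) ^ (n - k) = (-1) ^ k := by
    rw [← pow_add, show n + (n - k) = k + 2 * (n - k) by grind, pow_add, pow_mul]
    simp
  simp only [zsmul_eq_mul, nsmul_eq_mul, mul_one]
  push_cast
  rw [add_comm x, ← hsign]
  ring

lemma fwdDiff_iter_succ_apply {M G : Type*} [AddCommMonoid M] [AddCommGroup G] (h : M)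
    (f : M → G) (n : ℕ) (x : M) :
    (Δ_[h])^[n + 1] f x = (Δ_[h])^[n] f (x + h) - (Δ_[h])^[n] f x := by
  rw [Function.iterate_succ_apply']
  rfl

lemma fwdDiff_iter_inv (n : ℕ) {x : ℝ} (hx : 0 < x) :
    (Δ_[1])^[n] (·⁻¹) x = (-1) ^ n * n ! / ∏ j ∈ range (n + 1), (x + j) := by
  induction n generalizing x with
  | zero => simp
  | succ n ih =>
    rw [fwdDiff_iter_succ_apply, ih (by positivity), ih hx]
    have hP : ∏ j ∈ range (n + 2), (x + j) = (∏ j ∈ range (n + 1), (x + j)) * (x + (n + 1)) := by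
      rw [prod_range_succ]; push_cast; ring
    have hQ : ∏ j ∈ range (n + 2), (x + j) = (∏ j ∈ range (n + 1), (x + 1 + j)) * x := by
      rw [prod_range_succ']
      push_cast
      simp only [add_assoc, add_comm (1 : ℝ), add_zero]
    have hP0 : 0 < ∏ j ∈ range (n + 1), (x + j) := prod_pos fun j _ => by positivity
    rw [hP]
    field_simp
    push_cast [Nat.factorial_succ]
    linear_combination (-1) ^ n * (n ! : ℝ) * (hP.symm.trans hQ)

lemma hasDerivAt_fwdDiff_iter {f f' : ℝ → ℝ} (hf : ∀ x > 0, HasDerivAt f (f' x) x) (n : ℕ) :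
    ∀ x > 0, HasDerivAt ((Δ_[1])^[n] f) ((Δ_[1])^[n] f' x) x := by
  induction n with
  | zero => simpa using hf
  | succ n ih =>
    intro x hx
    have hshift := ((ih (x + 1) (by positivity)).comp_add_const x 1).sub (ih x hx)
    rw [Function.iterate_succ_apply', fwdDiff_iter_succ_apply]
    exact hshift

lemma neg_one_pow_mul_fwdDiff_iter_log_mem_Icc (n : ℕ) {x : ℝ} (hx : 0 < x) :
    (-1) ^ (n + 1) * (Δ_[1])^[n + 1] log x ∈
      Set.Icc (-(n ! / ∏ j ∈ range (n + 1), (x + j))) 0 := by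
  have hderiv := hasDerivAt_fwdDiff_iter (fun y (hy : 0 < y) => hasDerivAt_log hy.ne') n
  obtain ⟨ξ, ⟨hxξ, -⟩, hslope⟩ := exists_hasDerivAt_eq_slope ((Δ_[1])^[n] log)
    ((Δ_[1])^[n] (·⁻¹)) (lt_add_one x)
    (fun y hy => (hderiv y (hx.trans_le hy.1)).continuousAt.continuousWithinAt)
    (fun y hy => hderiv y (hx.trans hy.1))
  have hξ : 0 < ξ := hx.trans hxξ
  rw [add_sub_cancel_left, div_one, ← fwdDiff_iter_succ_apply, fwdDiff_iter_inv n hξ] at hslope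
  have hsign : (-1 : ℝ) ^ (n + 1) * (-1) ^ n = -1 := by
    rw [← pow_add, show n + 1 + n = 2 * n + 1 by ring, pow_succ, pow_mul]; simp
  rw [← hslope, ← mul_div_assoc, ← mul_assoc, hsign, neg_one_mul, neg_div]
  have hprod_le : ∏ j ∈ range (n + 1), (x + j) ≤ ∏ j ∈ range (n + 1), (ξ + j) :=
    prod_le_prod (fun j _ => by positivity) fun j _ => by linarith
  refine ⟨neg_le_neg ?_, neg_nonpos.2 (by positivity)⟩
  exact div_le_div_of_nonneg_left (by positivity) (prod_pos fun j _ => by positivity) hprod_le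

lemma tendsto_factorial_div_prod_add_atTop {x : ℝ} (hx : 0 < x) :
    Tendsto (fun n : ℕ => n ! / ∏ j ∈ range (n + 1), (x + j)) atTop (𝓝 0) := by
  have hlim := (GammaSeq_tendsto_Gamma x).mul
    ((tendsto_rpow_neg_atTop hx).comp tendsto_natCast_atTop_atTop)
  rw [mul_zero] at hlim
  refine hlim.congr' ((eventually_ne_atTop 0).mono fun n hn => ?_)
  have hn' : (0 : ℝ) < n := by exact_mod_cast Nat.pos_of_ne_zero hn
  simp only [GammaSeq, Function.comp_apply, rpow_neg hn'.le]
  field_simp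

lemma tendsto_neg_one_pow_mul_fwdDiff_iter_log {x : ℝ} (hx : 0 < x) :
    Tendsto (fun n => (-1) ^ n * (Δ_[1])^[n] log x) atTop (𝓝 0) := by
  rw [← tendsto_add_atTop_iff_nat 1]
  refine tendsto_of_tendsto_of_tendsto_of_le_of_le
    (by simpa using (tendsto_factorial_div_prod_add_atTop hx).neg) tendsto_const_nhds
    (fun n => ?_) fun n => (neg_one_pow_mul_fwdDiff_iter_log_mem_Icc n hx).2
  simpa using (neg_one_pow_mul_fwdDiff_iter_log_mem_Icc n hx).1

lemma hasSum_of_tendsto_of_nonpos {f : ℕ → ℝ} {s : ℝ} (hf : ∀ n, f (n + 1) ≤ 0)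
    (h : Tendsto (fun N => ∑ i ∈ range N, f i) atTop (𝓝 s)) : HasSum f s := by
  have htail : HasSum (fun n => -f (n + 1)) (f 0 - s) := by
    refine (hasSum_iff_tendsto_nat_of_nonneg (fun n => neg_nonneg.2 (hf n)) _).2 ?_
    refine (((tendsto_add_atTop_iff_nat 1).2 h).const_sub (f 0)).congr fun N => ?_
    rw [sum_range_succ', sum_neg_distrib]
    ring
  have hsum := (hasSum_nat_add_iff (f := f) 1).1 (by simpa using htail.neg)
  rwa [sum_range_one, sub_add_cancel] at hsum

theorem stmt6 (u : ℝ) (hu : 0 < u) :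
    HasSum (fun m : ℕ =>
        ∑ k ∈ range (m + 1), (m.choose k : ℝ) * (-1) ^ k * Real.log (k + u + 1))
      (Real.log u) := by
  have hterm (m : ℕ) : ∑ k ∈ range (m + 1), (m.choose k : ℝ) * (-1) ^ k * log (k + u + 1) =
      (-1) ^ m * (Δ_[1])^[m] log (u + 1) := by
    simp_rw [add_assoc]
    exact sum_range_choose_mul_neg_one_pow_eq_fwdDiff_iter log (u + 1) m
  have htelescope (N : ℕ) : ∑ m ∈ range N, (-1) ^ m * (Δ_[1])^[m] log (u + 1) =
      log u - (-1) ^ N * (Δ_[1])^[N] log u := by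
    have hstep (m : ℕ) : (-1) ^ m * (Δ_[1])^[m] log (u + 1) =
        (-1) ^ m * (Δ_[1])^[m] log u - (-1) ^ (m + 1) * (Δ_[1])^[m + 1] log u := by
      rw [fwdDiff_iter_succ_apply, pow_succ]
      ring
    simp only [hstep]
    rw [sum_range_sub' (fun m => (-1) ^ m * (Δ_[1])^[m] log u)]
    simp
  refine hasSum_of_tendsto_of_nonpos (fun m => ?_) ?_
  · rw [hterm]
    exact (neg_one_pow_mul_fwdDiff_iter_log_mem_Icc m (by positivity)).2
  · simp only [hterm, htelescope]
    simpa using (tendsto_neg_one_pow_mul_fwdDiff_iter_log hu).const_sub (log u)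
end

section
/- The Euler–Mascheroni constant γ equals the sum over j from 1 to infinity of (1/j) times the sum over i from 1 to j of binom(j−1, i−1) * (-1)^i * ln i. -/
/-!
Frullani's integral gives `log (k + 1) = ∫₀^∞ (e^{-t} - e^{-(k+1)t}) dt / t`, so by the binomial
theorem the inner sum for `j ≥ 2` equals `∫₀^∞ e^{-t} (1 - e^{-t})^{j-1} dt / t`, while the `j = 1`
term vanishes. Weighted by `1 / j`, these integrands sum, through `-log (1 - u) = ∑ uʲ / j` at
`u = 1 - e^{-t}`, to `G t = e^{-t} / (1 - e^{-t}) - e^{-t} / t` (`eulerIntegrand`); since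
`0 ≤ G t ≤ e^{-t}`, sum and integral commute. Finally
`∫₀^∞ (1 - e^{-nt}) G t dt = H_n - log (n + 1)` by the geometric series and Frullani again, and
this tends to `γ`.
-/

open Finset Real MeasureTheory Filter Topology Set

lemma exp_neg_pow (t : ℝ) (n : ℕ) : exp (-t) ^ n = exp (-n * t) := by
  rw [← exp_nat_mul]
  ring_nf

lemma integrableOn_exp_neg_pow_succ (n : ℕ) :
    IntegrableOn (fun t : ℝ => exp (-t) ^ (n + 1)) (Ioi 0) := by
  simp_rw [exp_neg_pow]
  exact exp_neg_integrableOn_Ioi 0 (by positivity)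

lemma integral_exp_neg_pow_succ (n : ℕ) :
    ∫ t in Ioi (0 : ℝ), exp (-t) ^ (n + 1) = 1 / (n + 1) := by
  simp_rw [exp_neg_pow]
  rw [integral_exp_mul_Ioi (by push_cast; linarith) 0]
  push_cast
  field_simp
  simp

lemma integrableOn_exp_neg_sub_exp_neg_mul_div {b : ℝ} (hb : 1 ≤ b) :
    IntegrableOn (fun t : ℝ => (exp (-t) - exp (-b * t)) / t) (Ioi 0) := by
  refine Integrable.mono' ((exp_neg_integrableOn_Ioi 0 one_pos).const_mul (b - 1))
    ((ContinuousOn.div (by fun_prop) continuousOn_id fun t ht => ht.ne').aestronglyMeasurable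
      measurableSet_Ioi) ?_
  refine ae_restrict_of_forall_mem measurableSet_Ioi fun t (ht : 0 < t) => ?_
  have hdiff : exp (-t) - exp (-b * t) = exp (-t) * (1 - exp (-((b - 1) * t))) := by
    rw [mul_sub, ← exp_add]
    ring_nf
  have hle : 1 - exp (-((b - 1) * t)) ≤ (b - 1) * t := by
    linarith [add_one_le_exp (-((b - 1) * t))]
  have hnonneg : 0 ≤ 1 - exp (-((b - 1) * t)) := by
    rw [sub_nonneg, exp_le_one_iff]
    nlinarith
  rw [norm_div, norm_of_nonneg (hdiff ▸ mul_nonneg (exp_pos _).le hnonneg),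
    Real.norm_of_nonneg ht.le, div_le_iff₀ ht, hdiff, neg_one_mul]
  nlinarith [exp_pos (-t)]

lemma integral_exp_neg_sub_exp_neg_mul_div {b : ℝ} (hb : 1 ≤ b) :
    ∫ t in Ioi (0 : ℝ), (exp (-t) - exp (-b * t)) / t = log b := by
  have h := Frullani.integral_Ioi_eq (f := fun x => exp (-x)) (a := 1) (b := b) (L := 1) (R := 0)
    ((by fun_prop : Continuous fun x : ℝ => exp (-x)).locallyIntegrable.locallyIntegrableOn _)
    one_pos (by linarith) ?_ ?_ ?_
  · simpa [div_eq_inv_mul] using h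
  · simpa using ((by fun_prop : Continuous fun x : ℝ => exp (-x)).tendsto 0).mono_left
      nhdsWithin_le_nhds
  · exact tendsto_exp_neg_atTop_nhds_zero
  · simpa [div_eq_inv_mul, neg_mul] using integrableOn_exp_neg_sub_exp_neg_mul_div hb

lemma integrableOn_exp_neg_sub_pow_succ_div (n : ℕ) :
    IntegrableOn (fun t : ℝ => (exp (-t) - exp (-t) ^ (n + 1)) / t) (Ioi 0) := by
  simp_rw [exp_neg_pow]
  exact_mod_cast integrableOn_exp_neg_sub_exp_neg_mul_div (b := n + 1) (by simp)

lemma integral_exp_neg_sub_pow_succ_div (n : ℕ) :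
    ∫ t in Ioi (0 : ℝ), (exp (-t) - exp (-t) ^ (n + 1)) / t = log (n + 1) := by
  simp_rw [exp_neg_pow]
  exact_mod_cast integral_exp_neg_sub_exp_neg_mul_div (b := n + 1) (by simp)

lemma mul_one_sub_pow_eq_sum_choose {R : Type*} [CommRing R] (x : R) {m : ℕ} (hm : m ≠ 0) :
    x * (1 - x) ^ m =
      ∑ k ∈ range (m + 1), (m.choose k : R) * (-1) ^ (k + 1) * (x - x ^ (k + 1)) := by
  have expand (y : R) :
      (1 - y) ^ m = ∑ k ∈ range (m + 1), (m.choose k : R) * (-1) ^ k * y ^ k := by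
    rw [sub_eq_neg_add, add_pow]
    refine sum_congr rfl fun k _ => ?_
    rw [one_pow, neg_pow]
    ring
  have alternating := expand 1
  rw [sub_self, zero_pow hm] at alternating
  calc x * (1 - x) ^ m = x * (1 - x) ^ m - x * 0 := by ring
    _ = _ := by
      rw [expand x, alternating, mul_sum, mul_sum, ← sum_sub_distrib]
      refine sum_congr rfl fun k _ => ?_
      ring

lemma integral_exp_neg_mul_one_sub_pow_div {m : ℕ} (hm : m ≠ 0) :
    ∫ t in Ioi (0 : ℝ), exp (-t) * (1 - exp (-t)) ^ m / t =
      ∑ k ∈ range (m + 1), (m.choose k : ℝ) * (-1) ^ (k + 1) * log (k + 1) := by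
  simp_rw [mul_one_sub_pow_eq_sum_choose _ hm, sum_div, mul_div_assoc]
  rw [integral_finsetSum _ fun k _ => (integrableOn_exp_neg_sub_pow_succ_div k).const_mul _]
  simp_rw [integral_const_mul, integral_exp_neg_sub_pow_succ_div]

noncomputable def eulerIntegrand (t : ℝ) : ℝ := exp (-t) / (1 - exp (-t)) - exp (-t) / t

lemma abs_eulerIntegrand_le {t : ℝ} (ht : 0 < t) : |eulerIntegrand t| ≤ exp (-t) := by
  have hq : 0 < exp (-t) := exp_pos _
  have hq1 : exp (-t) < 1 := exp_lt_one_iff.2 (by linarith)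
  have lower : 1 - t ≤ exp (-t) := by linarith [add_one_le_exp (-t)]
  have upper : exp (-t) * (1 + t) ≤ 1 := by
    calc exp (-t) * (1 + t) ≤ exp (-t) * exp t := by gcongr; linarith [add_one_le_exp t]
      _ = 1 := by rw [← exp_add, neg_add_cancel, exp_zero]
  have h : eulerIntegrand t = exp (-t) * (t - (1 - exp (-t))) / ((1 - exp (-t)) * t) := by
    have : 1 - exp (-t) ≠ 0 := by linarith
    rw [eulerIntegrand]
    field_simp
  have hden : 0 < (1 - exp (-t)) * t := by nlinarith
  rw [h, abs_of_nonneg (div_nonneg (by nlinarith) hden.le), div_le_iff₀ hden]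
  nlinarith

lemma continuousOn_eulerIntegrand : ContinuousOn eulerIntegrand (Ioi 0) := by
  have hq1 : ∀ t ∈ Ioi (0 : ℝ), 1 - exp (-t) ≠ 0 := fun t (ht : 0 < t) =>
    (sub_pos.2 (exp_lt_one_iff.2 (neg_lt_zero.2 ht))).ne'
  exact ((by fun_prop : Continuous fun t : ℝ => exp (-t)).continuousOn.div (by fun_prop) hq1).sub
    ((by fun_prop : Continuous fun t : ℝ => exp (-t)).continuousOn.div continuousOn_id
      fun t ht => ne_of_gt ht)

lemma integrableOn_eulerIntegrand : IntegrableOn eulerIntegrand (Ioi 0) :=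
  Integrable.mono' (g := fun t => exp (-t))
    (by simpa using exp_neg_integrableOn_Ioi 0 one_pos :
      IntegrableOn (fun t => exp (-t)) (Ioi 0) volume)
    (continuousOn_eulerIntegrand.aestronglyMeasurable measurableSet_Ioi)
    (ae_restrict_of_forall_mem measurableSet_Ioi fun _ ht =>
      (Real.norm_eq_abs _).trans_le (abs_eulerIntegrand_le ht))

lemma one_sub_pow_mul_eulerIntegrand (n : ℕ) {t : ℝ} (ht : 0 < t) :
    (1 - exp (-t) ^ n) * eulerIntegrand t =
      ∑ k ∈ range n, exp (-t) ^ (k + 1) - (exp (-t) - exp (-t) ^ (n + 1)) / t := by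
  have hq1 : exp (-t) < 1 := exp_lt_one_iff.2 (by linarith)
  have hgeom : ∑ k ∈ range n, exp (-t) ^ (k + 1) =
      exp (-t) * ((exp (-t) ^ n - 1) / (exp (-t) - 1)) := by
    simp_rw [pow_succ', ← mul_sum, geom_sum_eq hq1.ne]
  have h1 : exp (-t) - 1 ≠ 0 := by linarith
  have h2 : 1 - exp (-t) ≠ 0 := by linarith
  rw [hgeom, eulerIntegrand]
  field_simp
  ring

lemma integral_one_sub_pow_mul_eulerIntegrand (n : ℕ) :
    ∫ t in Ioi (0 : ℝ), (1 - exp (-t) ^ n) * eulerIntegrand t = harmonic n - log (n + 1) := by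
  rw [setIntegral_congr_fun measurableSet_Ioi fun t ht => one_sub_pow_mul_eulerIntegrand n ht,
    integral_sub (integrable_finsetSum _ fun k _ => integrableOn_exp_neg_pow_succ k)
      (integrableOn_exp_neg_sub_pow_succ_div n),
    integral_finsetSum _ fun k _ => integrableOn_exp_neg_pow_succ k,
    integral_exp_neg_sub_pow_succ_div]
  simp [harmonic, integral_exp_neg_pow_succ]

lemma integral_eulerIntegrand :
    ∫ t in Ioi (0 : ℝ), eulerIntegrand t = eulerMascheroniConstant := by
  have hDCT : Tendsto (fun n : ℕ => ∫ t in Ioi (0 : ℝ), (1 - exp (-t) ^ n) * eulerIntegrand t)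
      atTop (𝓝 (∫ t in Ioi (0 : ℝ), eulerIntegrand t)) := by
    refine tendsto_integral_of_dominated_convergence (fun t => ‖eulerIntegrand t‖)
      (fun n => ((by fun_prop : Continuous fun t : ℝ => 1 - exp (-t) ^ n).aestronglyMeasurable.mul
        integrableOn_eulerIntegrand.aestronglyMeasurable)) integrableOn_eulerIntegrand.norm
      (fun n => ae_restrict_of_forall_mem measurableSet_Ioi fun t (ht : 0 < t) => ?_)
      (ae_restrict_of_forall_mem measurableSet_Ioi fun t (ht : 0 < t) => ?_)
    · have hq : exp (-t) ^ n ≤ 1 := pow_le_one₀ (exp_pos _).le (exp_le_one_iff.2 (by linarith))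
      rw [norm_mul, Real.norm_of_nonneg (sub_nonneg.2 hq)]
      exact mul_le_of_le_one_left (norm_nonneg _) (by linarith [pow_pos (exp_pos (-t)) n])
    · simpa using ((tendsto_pow_atTop_nhds_zero_of_lt_one (exp_pos (-t)).le
        (exp_lt_one_iff.2 (by linarith))).const_sub 1).mul_const (eulerIntegrand t)
  simp_rw [integral_one_sub_pow_mul_eulerIntegrand] at hDCT
  exact tendsto_nhds_unique hDCT tendsto_harmonic_sub_log_add_one

lemma hasSum_eulerIntegrand {t : ℝ} (ht : 0 < t) :
    HasSum (fun n : ℕ => (n + 2 : ℝ)⁻¹ * (exp (-t) * (1 - exp (-t)) ^ (n + 1) / t))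
      (eulerIntegrand t) := by
  have hq1 : exp (-t) < 1 := exp_lt_one_iff.2 (by linarith)
  unfold eulerIntegrand
  set u := 1 - exp (-t) with hu
  have hu0 : 0 < u := sub_pos.2 hq1
  have hlog := hasSum_pow_div_log_of_abs_lt_one (x := u)
    (abs_lt.2 ⟨by linarith, by linarith [exp_pos (-t)]⟩)
  rw [hu, sub_sub_cancel, log_exp, neg_neg, ← hu] at hlog
  have htail : HasSum (fun n : ℕ => u ^ (n + 2) / (n + 2)) (t - u) := by
    have := (hasSum_nat_add_iff' 1).2 hlog
    simp only [range_one, sum_singleton, Nat.cast_add, Nat.cast_one, Nat.cast_zero, zero_add,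
      pow_one, div_one, add_assoc, one_add_one_eq_two] at this
    exact this
  have ht0 := ht.ne'
  have hu0' := hu0.ne'
  have hterm : (fun n : ℕ => (n + 2 : ℝ)⁻¹ * (exp (-t) * u ^ (n + 1) / t)) =
      fun n : ℕ => exp (-t) / (u * t) * (u ^ (n + 2) / (n + 2)) := by
    ext n
    field_simp
    ring
  have hsum : exp (-t) / u - exp (-t) / t = exp (-t) / (u * t) * (t - u) := by
    field_simp
  rw [hterm, hsum]
  exact htail.mul_left _

lemma hasSum_integral_exp_neg_mul_one_sub_pow_div :
    HasSum (fun n : ℕ =>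
        (n + 2 : ℝ)⁻¹ * ∫ t in Ioi (0 : ℝ), exp (-t) * (1 - exp (-t)) ^ (n + 1) / t)
      eulerMascheroniConstant := by
  set F : ℕ → ℝ → ℝ := fun n t => (n + 2 : ℝ)⁻¹ * (exp (-t) * (1 - exp (-t)) ^ (n + 1) / t)
  have hF_nonneg (n : ℕ) {t : ℝ} (ht : 0 < t) : 0 ≤ F n t := by
    have : exp (-t) ≤ 1 := exp_le_one_iff.2 (by linarith)
    have : 0 ≤ 1 - exp (-t) := by linarith
    positivity
  simp_rw [← integral_const_mul]
  rw [← integral_eulerIntegrand]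
  refine hasSum_integral_of_dominated_convergence F (fun n => ?_)
    (fun n => ae_restrict_of_forall_mem measurableSet_Ioi fun t ht =>
      (Real.norm_of_nonneg (hF_nonneg n ht)).le)
    (ae_restrict_of_forall_mem measurableSet_Ioi fun t ht => (hasSum_eulerIntegrand ht).summable)
    (integrableOn_eulerIntegrand.congr_fun (fun t ht => (hasSum_eulerIntegrand ht).tsum_eq.symm)
      measurableSet_Ioi)
    (ae_restrict_of_forall_mem measurableSet_Ioi fun t ht => hasSum_eulerIntegrand ht)
  exact (continuousOn_const.mul ((by fun_prop : Continuous fun t : ℝ =>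
    exp (-t) * (1 - exp (-t)) ^ (n + 1)).continuousOn.div continuousOn_id
      fun t ht => ne_of_gt ht)).aestronglyMeasurable measurableSet_Ioi

lemma sum_Icc_one_eq_sum_range {M : Type*} [AddCommMonoid M] (f : ℕ → M) (n : ℕ) :
    ∑ i ∈ Icc 1 n, f i = ∑ k ∈ range n, f (k + 1) := by
  rw [range_eq_Ico, sum_Ico_add' f 0 n 1, zero_add, ← Finset.Ico_add_one_right_eq_Icc]

theorem stmt8 :
    HasSum (fun j : ℕ =>
        (1 / (j + 1 : ℝ)) *
          ∑ i ∈ Icc 1 (j + 1), (Nat.choose j (i - 1) : ℝ) * (-1) ^ i * Real.log i)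
      Real.eulerMascheroniConstant := by
  have hterm (n : ℕ) :
      1 / ((n + 1 : ℕ) + 1 : ℝ) *
          ∑ i ∈ Icc 1 (n + 1 + 1), ((n + 1).choose (i - 1) : ℝ) * (-1) ^ i * log i =
        (n + 2 : ℝ)⁻¹ * ∫ t in Ioi (0 : ℝ), exp (-t) * (1 - exp (-t)) ^ (n + 1) / t := by
    rw [integral_exp_neg_mul_one_sub_pow_div n.add_one_ne_zero, sum_Icc_one_eq_sum_range]
    push_cast
    ring_nf
  rw [← hasSum_nat_add_iff' 1]
  simp only [hterm]
  simpa using hasSum_integral_exp_neg_mul_one_sub_pow_div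
end
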